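/- Let X, Y be Banach spaces, F₁, F₂ : X ⇉ Y with ȳ₁ ∈ F₁(x̄), ȳ₂ ∈ F₂(x̄), Gr F₁ and Gr F₂ locally closed around (x̄,ȳ₁) and (x̄,ȳ₂) respectively, F₁ metrically regular around (x̄,ȳ₁) with constant l > 0, F₂ Lipschitz-like around (x̄,ȳ₂) with constant m > 0, and lm < 1. Then there exists ε > 0 such that for every ρ ∈ (0,ε) and every (x,y,z) with y ∈ F₁(x), z ∈ F₂(x), x ∈ B(x̄,ε), y ∈ B(ȳ₁,ε), z ∈ B(ȳ₂,ε), one has B(y − z, (l⁻¹ − m)ρ) ⊆ (F₁ − F₂)(B(x,ρ)). -/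

import Mathlib

open Set Metric Pointwise Filter Topology

/-!
Fix `w` near `y - z` with residual `t = ‖w - (y - z)‖`. Metric regularity of `F₁` moves `x` to
a point where `F₁` contains `w + z`, at cost about `l t`; Lipschitz-likeness of `F₂` then moves
`z` along by at most `m` times that displacement, and this move of `z` is exactly the new
residual. For any rate `c < l⁻¹ - m` the residuals therefore decay geometrically with ratio
`m / (m + c) < 1` while `x` travels at most `t / c` in total. By completeness the iterates
converge, and local closedness of the two graphs puts the limit `(x', w + z', z')` on both of
them, so `w = (w + z') - z' ∈ (F₁ - F₂)(x')`. Taking `c` close enough to `l⁻¹ - m` gives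
`t / c < ρ` whenever `t < (l⁻¹ - m) ρ`.
-/

section SetValued

variable {X Y : Type*}

def MetricRegularOn [PseudoEMetricSpace X] [PseudoEMetricSpace Y]
    (F : X → Set Y) (l : ℝ) (U : Set X) (V : Set Y) : Prop :=
  ∀ x ∈ U, ∀ y ∈ V, infEDist x {x' | y ∈ F x'} ≤ ENNReal.ofReal l * infEDist y (F x)

def LipschitzLikeOn [SeminormedAddCommGroup X] [SeminormedAddCommGroup Y] [NormedSpace ℝ Y]
    (F : X → Set Y) (m : ℝ) (U : Set X) (V : Set Y) : Prop :=
  ∀ x ∈ U, ∀ u ∈ U, F x ∩ V ⊆ F u + (m * ‖x - u‖) • closedBall (0 : Y) 1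

theorem MetricRegularOn.mono [PseudoEMetricSpace X] [PseudoEMetricSpace Y] {F : X → Set Y}
    {l : ℝ} {U U' : Set X} {V V' : Set Y} (h : MetricRegularOn F l U V) (hU : U' ⊆ U)
    (hV : V' ⊆ V) : MetricRegularOn F l U' V' :=
  fun x hx y hy ↦ h x (hU hx) y (hV hy)

theorem MetricRegularOn.exists_mem_dist_le [PseudoMetricSpace X] [MetricSpace Y]
    {F : X → Set Y} {l l' : ℝ} {U : Set X} {V : Set Y} (h : MetricRegularOn F l U V)
    (hl : 0 ≤ l) (hll' : l < l') {x : X} {y y' : Y} (hx : x ∈ U) (hy : y ∈ V) (hy' : y' ∈ F x) :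
    ∃ x', y ∈ F x' ∧ dist x' x ≤ l' * dist y y' := by
  rcases eq_or_ne y y' with rfl | hne
  · exact ⟨x, hy', by simp⟩
  have hlt : infEDist x {x' | y ∈ F x'} < ENNReal.ofReal (l' * dist y y') := calc
    _ ≤ ENNReal.ofReal l * infEDist y (F x) := h x hx y hy
    _ ≤ ENNReal.ofReal l * ENNReal.ofReal (dist y y') := by
      rw [← edist_dist]; gcongr; exact infEDist_le_edist_of_mem hy'
    _ = ENNReal.ofReal (l * dist y y') := (ENNReal.ofReal_mul hl).symm
    _ < ENNReal.ofReal (l' * dist y y') := by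
      have hd := dist_pos.2 hne
      rw [ENNReal.ofReal_lt_ofReal_iff (mul_pos (hl.trans_lt hll') hd)]
      gcongr
  obtain ⟨x', hx', hxx'⟩ := infEDist_lt_iff.1 hlt
  exact ⟨x', hx', by rw [dist_comm]; exact (edist_lt_ofReal.1 hxx').le⟩

theorem LipschitzLikeOn.mono [SeminormedAddCommGroup X] [SeminormedAddCommGroup Y]
    [NormedSpace ℝ Y] {F : X → Set Y} {m : ℝ} {U U' : Set X} {V V' : Set Y}
    (h : LipschitzLikeOn F m U V) (hU : U' ⊆ U) (hV : V' ⊆ V) : LipschitzLikeOn F m U' V' :=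
  fun x hx u hu ↦ (inter_subset_inter_right _ hV).trans (h x (hU hx) u (hU hu))

theorem LipschitzLikeOn.exists_mem_dist_le [SeminormedAddCommGroup X] [NormedAddCommGroup Y]
    [NormedSpace ℝ Y] {F : X → Set Y} {m : ℝ} {U : Set X} {V : Set Y}
    (h : LipschitzLikeOn F m U V) (hm : 0 ≤ m) {x u : X} {z : Y} (hx : x ∈ U) (hu : u ∈ U)
    (hz : z ∈ F x ∩ V) : ∃ z' ∈ F u, dist z' z ≤ m * dist x u := by
  have hz' := h x hx u hu hz
  rw [smul_unitClosedBall_of_nonneg (by positivity)] at hz'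
  obtain ⟨z', hz', v, hv, rfl⟩ := hz'
  refine ⟨z', hz', ?_⟩
  rw [mem_closedBall_zero_iff] at hv
  simpa [dist_eq_norm] using hv

theorem IsClosed.inter_of_subset {α : Type*} [TopologicalSpace α] {s t u : Set α}
    (h : IsClosed (s ∩ t)) (hu : IsClosed u) (hut : u ⊆ t) : IsClosed (s ∩ u) := by
  rw [← inter_eq_right.2 hut, ← inter_assoc]
  exact h.inter hu

end SetValued

namespace DifferenceOpenness

variable {X Y : Type*} [SeminormedAddCommGroup X] [NormedAddCommGroup Y]
  {F₁ F₂ : X → Set Y} {l m c a : ℝ} {x : X} {y z w : Y}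

variable (F₁ F₂ m c a x y z w) in
/-- The residual `dist w (y' - z')` of a state `(x', y', z')` is a budget: a step moves `x'` by
at most `1 / (m + c)` times the residual and leaves at most `m / (m + c)` of it, so neither
`c * dist x' x + residual` nor `c * dist z' z + m * residual` ever increases. -/
def admissible : Set (X × Y × Y) :=
  {p | p.2.1 ∈ F₁ p.1 ∧ p.2.2 ∈ F₂ p.1 ∧
    c * dist p.1 x + dist w (p.2.1 - p.2.2) ≤ c * a ∧
    c * dist p.2.2 z + m * dist w (p.2.1 - p.2.2) ≤ m * (c * a) ∧
    dist p.2.1 y ≤ (m + c) * a}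

theorem admissible_subset (hm : 0 ≤ m) (hc : 0 < c) :
    admissible F₁ F₂ m c a x y z w ⊆
      closedBall x a ×ˢ closedBall y ((m + c) * a) ×ˢ closedBall z (m * a) := by
  rintro p ⟨-, -, hx_budget, hz_budget, hy⟩
  have := dist_nonneg (x := w) (y := p.2.1 - p.2.2)
  refine ⟨?_, hy, ?_⟩ <;> rw [mem_closedBall] <;> nlinarith

variable (m c w) in
def IsStep (p q : X × Y × Y) : Prop :=
  q.2.1 = w + p.2.2 ∧ (m + c) * dist q.1 p.1 ≤ dist w (p.2.1 - p.2.2) ∧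
    dist q.2.2 p.2.2 ≤ m * dist q.1 p.1

theorem exists_isStep [NormedSpace ℝ Y] (hl : 0 ≤ l) (hm : 0 ≤ m) (hc : 0 < c)
    (hlmc : l * (m + c) < 1)
    (hreg : MetricRegularOn F₁ l (closedBall x a) (closedBall y ((m + c) * a)))
    (hlip : LipschitzLikeOn F₂ m (closedBall x a) (closedBall z (m * a)))
    (hw : dist w (y - z) ≤ c * a) {p : X × Y × Y} (hp : p ∈ admissible F₁ F₂ m c a x y z w) :
    ∃ q ∈ admissible F₁ F₂ m c a x y z w, IsStep m c w p q := by
  obtain ⟨x₁, y₁, z₁⟩ := p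
  obtain ⟨hx₁, -, hz₁a⟩ := admissible_subset hm hc hp
  simp only [admissible, mem_ofPred_eq] at hp
  obtain ⟨hy₁, hz₁, hx_budget, hz_budget, -⟩ := hp
  have hwz₁ : dist (w + z₁) y ≤ (m + c) * a := calc
    dist (w + z₁) y = dist (w + z₁) (y - z + z) := by rw [sub_add_cancel]
    _ ≤ dist w (y - z) + dist z₁ z := dist_add_add_le _ _ _ _
    _ ≤ (m + c) * a := by rw [mem_closedBall] at hz₁a; linarith
  have hmc : 0 < m + c := by linarith
  have hl' : l < (m + c)⁻¹ := by rwa [← one_div, lt_div_iff₀ hmc]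
  obtain ⟨x₂, hx₂F, hdx⟩ := hreg.exists_mem_dist_le hl hl' hx₁ (mem_closedBall.2 hwz₁) hy₁
  rw [← dist_sub_eq_dist_add_right] at hdx
  replace hdx := (le_inv_mul_iff₀ hmc).1 hdx
  have hx₂ : x₂ ∈ closedBall x a := by
    rw [mem_closedBall]
    nlinarith [dist_triangle x₂ x₁ x, dist_nonneg (x := x₂) (y := x₁)]
  obtain ⟨z₂, hz₂F, hdz⟩ := hlip.exists_mem_dist_le hm hx₁ hx₂ ⟨hz₁, hz₁a⟩
  rw [dist_comm x₁] at hdz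
  have hr₂ : dist w (w + z₁ - z₂) = dist z₂ z₁ := by
    rw [dist_eq_norm, dist_eq_norm]; congr 1; abel
  refine ⟨(x₂, w + z₁, z₂), ⟨hx₂F, hz₂F, ?_, ?_, hwz₁⟩, rfl, hdx, hdz⟩
  · rw [hr₂]
    nlinarith [dist_triangle x₂ x₁ x, dist_nonneg (x := x₂) (y := x₁)]
  · rw [hr₂]
    nlinarith [dist_triangle z₂ z₁ z, dist_nonneg (x := x₂) (y := x₁)]

theorem exists_mem_closedBall_mem_sub_of_isStep [CompleteSpace X] [CompleteSpace Y]
    (hm : 0 ≤ m) (hc : 0 < c)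
    (hcl₁ : IsClosed ({q : X × Y | q.2 ∈ F₁ q.1} ∩ closedBall x a ×ˢ closedBall y ((m + c) * a)))
    (hcl₂ : IsClosed ({q : X × Y | q.2 ∈ F₂ q.1} ∩ closedBall x a ×ˢ closedBall z (m * a)))
    {f : ℕ → X × Y × Y} (hf : ∀ n, f n ∈ admissible F₁ F₂ m c a x y z w)
    (hstep : ∀ n, IsStep m c w (f n) (f (n + 1))) :
    ∃ x' ∈ closedBall x a, w ∈ F₁ x' - F₂ x' := by
  set r : ℕ → ℝ := fun n ↦ dist w ((f n).2.1 - (f n).2.2) with hr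
  have hmc : 0 < m + c := by linarith
  have hθ₀ : 0 ≤ m / (m + c) := by positivity
  have hθ₁ : m / (m + c) < 1 := (div_lt_one hmc).2 (by linarith)
  have hdx : ∀ n, dist (f n).1 (f (n + 1)).1 ≤ r n / (m + c) := fun n ↦ by
    rw [dist_comm, le_div_iff₀ hmc, mul_comm]; exact (hstep n).2.1
  have hdz : ∀ n, dist (f n).2.2 (f (n + 1)).2.2 ≤ m * (r n / (m + c)) := fun n ↦ by
    rw [dist_comm]; exact (hstep n).2.2.trans (by rw [dist_comm]; gcongr; exact hdx n)
  have hr_succ : ∀ n, r (n + 1) ≤ m / (m + c) * r n := fun n ↦ calc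
    r (n + 1) = dist (f n).2.2 (f (n + 1)).2.2 := by
      simp only [hr, (hstep n).1, dist_eq_norm]; rw [← norm_neg]; congr 1; abel
    _ ≤ m / (m + c) * r n := by rw [div_mul_eq_mul_div, mul_div_assoc]; exact hdz n
  have hr_geom : ∀ n, r n ≤ (m / (m + c)) ^ n * r 0 := fun n ↦ le_geom hθ₀ n fun k _ ↦ hr_succ k
  have hx_cauchy : CauchySeq fun n ↦ (f n).1 :=
    cauchySeq_of_le_geometric _ (r 0 / (m + c)) hθ₁ fun n ↦ (hdx n).trans <| by
      rw [div_mul_eq_mul_div, mul_comm]; gcongr; exact hr_geom n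
  have hz_cauchy : CauchySeq fun n ↦ (f n).2.2 :=
    cauchySeq_of_le_geometric _ (m * (r 0 / (m + c))) hθ₁ fun n ↦ (hdz n).trans <| by
      rw [mul_assoc, div_mul_eq_mul_div, mul_comm (r 0)]; gcongr; exact hr_geom n
  obtain ⟨x', hx'⟩ := cauchySeq_tendsto_of_complete hx_cauchy
  obtain ⟨z', hz'⟩ := cauchySeq_tendsto_of_complete hz_cauchy
  have hy' : Tendsto (fun n ↦ (f n).2.1) atTop (𝓝 (w + z')) := by
    rw [← tendsto_add_atTop_iff_nat 1]
    simp only [fun n ↦ (hstep n).1]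
    exact tendsto_const_nhds.add hz'
  have hbox := fun n ↦ admissible_subset hm hc (hf n)
  have h₁ := hcl₁.mem_of_tendsto (hx'.prodMk_nhds hy')
    (.of_forall fun n ↦ ⟨(hf n).1, (hbox n).1, (hbox n).2.1⟩)
  have h₂ := hcl₂.mem_of_tendsto (hx'.prodMk_nhds hz')
    (.of_forall fun n ↦ ⟨(hf n).2.1, (hbox n).1, (hbox n).2.2⟩)
  exact ⟨x', h₂.2.1, w + z', h₁.1, z', h₂.1, add_sub_cancel_right w z'⟩

theorem exists_mem_closedBall_mem_sub [CompleteSpace X] [CompleteSpace Y] [NormedSpace ℝ Y]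
    (hl : 0 ≤ l) (hm : 0 ≤ m) (hc : 0 < c) (hlmc : l * (m + c) < 1)
    (hreg : MetricRegularOn F₁ l (closedBall x a) (closedBall y ((m + c) * a)))
    (hlip : LipschitzLikeOn F₂ m (closedBall x a) (closedBall z (m * a)))
    (hcl₁ : IsClosed ({q : X × Y | q.2 ∈ F₁ q.1} ∩ closedBall x a ×ˢ closedBall y ((m + c) * a)))
    (hcl₂ : IsClosed ({q : X × Y | q.2 ∈ F₂ q.1} ∩ closedBall x a ×ˢ closedBall z (m * a)))
    (hy : y ∈ F₁ x) (hz : z ∈ F₂ x) (hw : dist w (y - z) ≤ c * a) :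
    ∃ x' ∈ closedBall x a, w ∈ F₁ x' - F₂ x' := by
  have ha : 0 ≤ a := nonneg_of_mul_nonneg_right (dist_nonneg.trans hw) hc
  have h₀ : (x, y, z) ∈ admissible F₁ F₂ m c a x y z w := by
    refine ⟨hy, hz, ?_, ?_, ?_⟩ <;> simp only [dist_self, mul_zero, zero_add]
    · exact hw
    · exact mul_le_mul_of_nonneg_left hw hm
    · positivity
  choose! g hg hgstep using fun p (hp : p ∈ admissible F₁ F₂ m c a x y z w) ↦
    exists_isStep hl hm hc hlmc hreg hlip hw hp
  have hf : ∀ n, g^[n] (x, y, z) ∈ admissible F₁ F₂ m c a x y z w :=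
    fun n ↦ MapsTo.iterate hg n h₀
  refine exists_mem_closedBall_mem_sub_of_isStep hm hc hcl₁ hcl₂ hf fun n ↦ ?_
  rw [Function.iterate_succ_apply']
  exact hgstep _ (hf n)

theorem ball_sub_subset_biUnion_sub [CompleteSpace X] [CompleteSpace Y] [NormedSpace ℝ Y]
    {x₀ : X} {y₁ y₂ : Y} {δ ε ρ : ℝ} (hl : 0 < l) (hm : 0 ≤ m) (hlm : l * m < 1)
    (hreg : MetricRegularOn F₁ l (ball x₀ δ) (ball y₁ δ))
    (hlip : LipschitzLikeOn F₂ m (ball x₀ δ) (ball y₂ δ))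
    (hcl₁ : IsClosed ({q : X × Y | q.2 ∈ F₁ q.1} ∩ closedBall (x₀, y₁) δ))
    (hcl₂ : IsClosed ({q : X × Y | q.2 ∈ F₂ q.1} ∩ closedBall (x₀, y₂) δ))
    (hε : (2 + l⁻¹) * ε ≤ δ) (hρ : ρ ∈ Ioo 0 ε) (hx : x ∈ ball x₀ ε) (hy : y ∈ ball y₁ ε)
    (hz : z ∈ ball y₂ ε) (hyF : y ∈ F₁ x) (hzF : z ∈ F₂ x) :
    ball (y - z) ((l⁻¹ - m) * ρ) ⊆ ⋃ x' ∈ ball x ρ, (F₁ x' - F₂ x') := by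
  intro w hw
  rw [mem_ball] at hw hx hy hz
  obtain ⟨hρ, hρε⟩ := hρ
  set t := dist w (y - z)
  have hml : m < l⁻¹ := by rwa [← one_div, lt_div_iff₀ hl, mul_comm]
  -- any rate `c` strictly between `t / ρ` and `l⁻¹ - m` will do
  set c := (t / ρ + (l⁻¹ - m)) / 2 with hc_def
  have htρ : t / ρ < l⁻¹ - m := by rwa [div_lt_iff₀ hρ]
  have htρ₀ : 0 ≤ t / ρ := by positivity
  have hc : 0 < c := by linarith
  have hlmc : l * (m + c) < 1 := by rw [← lt_div_iff₀' hl, one_div]; linarith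
  set a := t / c
  have hca : c * a = t := mul_div_cancel₀ _ hc.ne'
  have ha : a < ρ := by
    rw [div_lt_iff₀ hc, mul_comm]
    exact (div_lt_iff₀ hρ).1 (by linarith)
  have ha₀ : 0 ≤ a := by positivity
  have hma : m * a ≤ m * ε := by gcongr; linarith
  have hmε : m * ε ≤ l⁻¹ * ε := by gcongr; linarith
  have hlε : l⁻¹ * ρ ≤ l⁻¹ * ε := by gcongr
  have hlε₀ : 0 ≤ l⁻¹ * ε := by have := hρ.trans hρε; positivity
  have hU : closedBall x a ⊆ ball x₀ δ := closedBall_subset_ball' (by linarith)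
  have hV₁ : closedBall y ((m + c) * a) ⊆ ball y₁ δ := closedBall_subset_ball' (by nlinarith)
  have hV₂ : closedBall z (m * a) ⊆ ball y₂ δ := closedBall_subset_ball' (by linarith)
  have hbox {y₀ : Y} {V : Set Y} (hV : V ⊆ ball y₀ δ) :
      closedBall x a ×ˢ V ⊆ closedBall (x₀, y₀) δ :=
    (prod_mono (hU.trans ball_subset_closedBall) (hV.trans ball_subset_closedBall)).trans
      (closedBall_prod_same _ _ _).subset
  obtain ⟨x', hx', hw'⟩ := exists_mem_closedBall_mem_sub hl.le hm hc hlmc (hreg.mono hU hV₁)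
    (hlip.mono hU hV₂)
    (hcl₁.inter_of_subset (isClosed_closedBall.prod isClosed_closedBall) (hbox hV₁))
    (hcl₂.inter_of_subset (isClosed_closedBall.prod isClosed_closedBall) (hbox hV₂))
    hyF hzF hca.ge
  exact mem_iUnion₂.2 ⟨x', closedBall_subset_ball ha hx', hw'⟩

end DifferenceOpenness

theorem openness_of_difference_general
    {X Y : Type*} [NormedAddCommGroup X] [CompleteSpace X]
    [NormedAddCommGroup Y] [NormedSpace ℝ Y] [CompleteSpace Y]
    (F₁ F₂ : X → Set Y) (x₀ : X) (y₁ y₂ : Y)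
    (l m : ℝ) (hl : 0 < l) (hm : 0 < m) (hlm : l * m < 1)
    (hcl₁ : ∃ r > 0, IsClosed ({q : X × Y | q.2 ∈ F₁ q.1} ∩ Metric.closedBall (x₀, y₁) r))
    (hcl₂ : ∃ r > 0, IsClosed ({q : X × Y | q.2 ∈ F₂ q.1} ∩ Metric.closedBall (x₀, y₂) r))
    -- F₁ is l-metrically regular around (x₀, y₁)
    (hreg : ∃ U ∈ nhds x₀, ∃ V ∈ nhds y₁, ∀ x ∈ U, ∀ y ∈ V,
      EMetric.infEdist x {x' | y ∈ F₁ x'} ≤ ENNReal.ofReal l * EMetric.infEdist y (F₁ x))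
    -- F₂ is m-Lipschitz-like around (x₀, y₂)
    (hlip : ∃ U ∈ nhds x₀, ∃ V ∈ nhds y₂, ∀ x ∈ U, ∀ u ∈ U,
      F₂ x ∩ V ⊆ F₂ u + (m * ‖x - u‖) • Metric.closedBall (0:Y) 1) :
    ∃ ε > 0, ∀ ρ ∈ Ioo (0:ℝ) ε, ∀ x ∈ ball x₀ ε, ∀ y ∈ ball y₁ ε, ∀ z ∈ ball y₂ ε,
      y ∈ F₁ x → z ∈ F₂ x →
        ball (y - z) ((l⁻¹ - m) * ρ) ⊆ ⋃ x' ∈ ball x ρ, (F₁ x' - F₂ x') := by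
  obtain ⟨r₁, hr₁, hcl₁⟩ := hcl₁
  obtain ⟨r₂, hr₂, hcl₂⟩ := hcl₂
  obtain ⟨U₁, hU₁, V₁, hV₁, hreg⟩ := hreg
  obtain ⟨U₂, hU₂, V₂, hV₂, hlip⟩ := hlip
  obtain ⟨δ, hδ, hδU₁, hδV₁, hδU₂, hδV₂, hδr₁, hδr₂⟩ : ∃ δ > 0, ball x₀ δ ⊆ U₁ ∧ ball y₁ δ ⊆ V₁ ∧
      ball x₀ δ ⊆ U₂ ∧ ball y₂ δ ⊆ V₂ ∧ δ ≤ r₁ ∧ δ ≤ r₂ := by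
    have h₀ : ∀ᶠ δ in 𝓝[>] (0 : ℝ), 0 < δ := self_mem_nhdsWithin
    have h : ∀ᶠ δ in 𝓝 (0 : ℝ), ball x₀ δ ⊆ U₁ ∧ ball y₁ δ ⊆ V₁ ∧ ball x₀ δ ⊆ U₂ ∧
        ball y₂ δ ⊆ V₂ ∧ δ ≤ r₁ ∧ δ ≤ r₂ :=
      (eventually_ball_subset hU₁).and <| (eventually_ball_subset hV₁).and <|
        (eventually_ball_subset hU₂).and <| (eventually_ball_subset hV₂).and <|
          (eventually_le_nhds hr₁).and (eventually_le_nhds hr₂)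
    exact (h₀.and (nhdsWithin_le_nhds h)).exists
  have hreg' : MetricRegularOn F₁ l (ball x₀ δ) (ball y₁ δ) := MetricRegularOn.mono hreg hδU₁ hδV₁
  have hlip' : LipschitzLikeOn F₂ m (ball x₀ δ) (ball y₂ δ) := LipschitzLikeOn.mono hlip hδU₂ hδV₂
  refine ⟨δ / (2 + l⁻¹), by positivity, fun ρ hρ x hx y hy z hz hyF hzF ↦ ?_⟩
  exact DifferenceOpenness.ball_sub_subset_biUnion_sub hl hm.le hlm hreg' hlip'
    (hcl₁.inter_of_subset isClosed_closedBall (closedBall_subset_closedBall hδr₁))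
    (hcl₂.inter_of_subset isClosed_closedBall (closedBall_subset_closedBall hδr₂))
    (mul_div_cancel₀ _ (by positivity)).le hρ hx hy hz hyF hzF

/-- Openness at linear rate `l⁻¹ − m` of the difference `F₁ − F₂` at points of its
graph with intermediate points near the reference points. -/
theorem openness_of_difference
    {X Y : Type*} [NormedAddCommGroup X] [NormedSpace ℝ X] [CompleteSpace X]
    [NormedAddCommGroup Y] [NormedSpace ℝ Y] [CompleteSpace Y]
    (F₁ F₂ : X → Set Y) (x₀ : X) (y₁ y₂ : Y)
    (hy₁ : y₁ ∈ F₁ x₀) (hy₂ : y₂ ∈ F₂ x₀)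
    (l m : ℝ) (hl : 0 < l) (hm : 0 < m) (hlm : l * m < 1)
    (hcl₁ : ∃ r > 0, IsClosed ({q : X × Y | q.2 ∈ F₁ q.1} ∩ Metric.closedBall (x₀, y₁) r))
    (hcl₂ : ∃ r > 0, IsClosed ({q : X × Y | q.2 ∈ F₂ q.1} ∩ Metric.closedBall (x₀, y₂) r))
    -- F₁ is l-metrically regular around (x₀, y₁)
    (hreg : ∃ U ∈ nhds x₀, ∃ V ∈ nhds y₁, ∀ x ∈ U, ∀ y ∈ V,
      EMetric.infEdist x {x' | y ∈ F₁ x'} ≤ ENNReal.ofReal l * EMetric.infEdist y (F₁ x))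
    -- F₂ is m-Lipschitz-like around (x₀, y₂)
    (hlip : ∃ U ∈ nhds x₀, ∃ V ∈ nhds y₂, ∀ x ∈ U, ∀ u ∈ U,
      F₂ x ∩ V ⊆ F₂ u + (m * ‖x - u‖) • Metric.closedBall (0:Y) 1) :
    ∃ ε > 0, ∀ ρ ∈ Ioo (0:ℝ) ε, ∀ x ∈ ball x₀ ε, ∀ y ∈ ball y₁ ε, ∀ z ∈ ball y₂ ε,
      y ∈ F₁ x → z ∈ F₂ x →
        ball (y - z) ((l⁻¹ - m) * ρ) ⊆ ⋃ x' ∈ ball x ρ, (F₁ x' - F₂ x') :=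
  openness_of_difference_general F₁ F₂ x₀ y₁ y₂ l m hl hm hlm hcl₁ hcl₂ hreg hlip
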